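/- arXiv:2212.02457 — 3 statements merged into one kernel-verified Lean document; each statement's English description precedes it below -/
import Mathlib

section
/- (Regression: exponential rate of directional convergence.) Consider the regression adversarial covariate-shift dynamic x_{t+1} = x_t + 2γ·⟨x_t, θ⋆ − θ⁰⟩·(θ⋆ − θ⁰) in a real Hilbert space with θ⋆ ≠ θ⁰, γ > 0, and x_0 satisfying ⟨x_0, θ⋆ − θ⁰⟩ ≠ 0. Then for every T ≥ 0, with Δ_b = (θ⋆ − θ⁰)/‖θ⋆ − θ⁰‖ and K = (‖x_0‖² − ⟨x_0, Δ_b⟩²)/⟨x_0, Δ_b⟩², one has 1 − K·e^{−cT} ≤ |⟨x_T/‖x_T‖, Δ_b⟩| ≤ 1, where c = 2·log(1 + 2γ‖θ⋆ − θ⁰‖²). -/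
/-!
Write `v = θ⋆ - θ⁰` and `u = v / ‖v‖`. The step adds to `x_t` a multiple of `u`, namely
`2γ‖v‖² ⟪x_t, u⟫ u`, so the coordinate along `u` is multiplied by `ρ = 1 + 2γ‖v‖²` at each
step, while the component orthogonal to `u` never changes. Hence the quantity
`K e^{-cT} = (‖x_0‖² - ⟪x_0, u⟫²) / (ρ^{2T} ⟪x_0, u⟫²)` equals `(‖x_T‖² - a²) / a²` with
`a = ⟪x_T, u⟫`, and with `s = a² / ‖x_T‖² ∈ (0, 1]` the claim reduces to
`2 - 1/s ≤ s ≤ √s`.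
-/

open scoped RealInnerProductSpace

section UnitVector

variable {H : Type*} [NormedAddCommGroup H] [InnerProductSpace ℝ H] {u : H}

lemma inner_add_smul_of_norm_eq_one (hu : ‖u‖ = 1) (x : H) (s : ℝ) :
    ⟪x + s • u, u⟫ = ⟪x, u⟫ + s := by
  rw [inner_add_left, real_inner_smul_left, real_inner_self_eq_norm_sq, hu]
  ring

lemma norm_sq_sub_inner_sq_add_smul_of_norm_eq_one (hu : ‖u‖ = 1) (x : H) (s : ℝ) :
    ‖x + s • u‖ ^ 2 - ⟪x + s • u, u⟫ ^ 2 = ‖x‖ ^ 2 - ⟪x, u⟫ ^ 2 := by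
  rw [inner_add_smul_of_norm_eq_one hu, norm_add_sq_real, real_inner_smul_right, norm_smul, hu,
    Real.norm_eq_abs, mul_one, sq_abs]
  ring

lemma abs_inner_inv_norm_smul_le_norm (x y : H) : |⟪‖x‖⁻¹ • x, y⟫| ≤ ‖y‖ := by
  calc |⟪‖x‖⁻¹ • x, y⟫| ≤ ‖‖x‖⁻¹ • x‖ * ‖y‖ := abs_real_inner_le_norm _ _
    _ ≤ 1 * ‖y‖ := by
      gcongr
      rw [norm_smul, norm_inv, norm_norm]
      exact inv_mul_le_one_of_le₀ le_rfl (norm_nonneg x)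
    _ = ‖y‖ := one_mul _

lemma one_sub_div_le_abs_inner_inv_norm_smul (hu : ‖u‖ = 1) {x : H} (hx : ⟪x, u⟫ ≠ 0) :
    1 - (‖x‖ ^ 2 - ⟪x, u⟫ ^ 2) / ⟪x, u⟫ ^ 2 ≤ |⟪‖x‖⁻¹ • x, u⟫| := by
  set a := ⟪x, u⟫
  have hxne : x ≠ 0 := fun h => hx (by simp [a, h])
  have hn : 0 < ‖x‖ := norm_pos_iff.mpr hxne
  have ha_le : |a| ≤ ‖x‖ := by simpa [hu] using abs_real_inner_le_norm x u
  have hdiff : (‖x‖ ^ 2 - a ^ 2) / a ^ 2 + (|a| / ‖x‖) ^ 2 - 1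
      = (‖x‖ ^ 2 - a ^ 2) ^ 2 / (a ^ 2 * ‖x‖ ^ 2) := by
    rw [div_pow, sq_abs]
    field_simp
    ring
  calc 1 - (‖x‖ ^ 2 - a ^ 2) / a ^ 2 ≤ (|a| / ‖x‖) ^ 2 := by
        have : 0 ≤ (‖x‖ ^ 2 - a ^ 2) ^ 2 / (a ^ 2 * ‖x‖ ^ 2) := by positivity
        linarith
    _ ≤ |a| / ‖x‖ :=
        pow_le_of_le_one (by positivity) ((div_le_one hn).mpr ha_le) two_ne_zero
    _ = |⟪‖x‖⁻¹ • x, u⟫| := by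
        rw [real_inner_smul_left, abs_mul, abs_inv, abs_norm, inv_mul_eq_div]

end UnitVector

section RankOneDynamic

variable {H : Type*} [NormedAddCommGroup H] [InnerProductSpace ℝ H] {u : H} {μ : ℝ}
  {x : ℕ → H}

lemma inner_eq_pow_mul_of_rankOne_step (hu : ‖u‖ = 1)
    (hx : ∀ t, x (t + 1) = x t + (μ * ⟪x t, u⟫) • u) (t : ℕ) :
    ⟪x t, u⟫ = (1 + μ) ^ t * ⟪x 0, u⟫ := by
  induction t with
  | zero => simp
  | succ t ih =>
    rw [hx t, inner_add_smul_of_norm_eq_one hu, pow_succ, ih]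
    ring

lemma norm_sq_sub_inner_sq_of_rankOne_step (hu : ‖u‖ = 1)
    (hx : ∀ t, x (t + 1) = x t + (μ * ⟪x t, u⟫) • u) (t : ℕ) :
    ‖x t‖ ^ 2 - ⟪x t, u⟫ ^ 2 = ‖x 0‖ ^ 2 - ⟪x 0, u⟫ ^ 2 := by
  induction t with
  | zero => rfl
  | succ t ih => rw [hx t, norm_sq_sub_inner_sq_add_smul_of_norm_eq_one hu, ih]

lemma one_sub_div_mul_inv_pow_le_abs_inner_of_rankOne_step (hu : ‖u‖ = 1) (hμ : 0 < 1 + μ)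
    (hx : ∀ t, x (t + 1) = x t + (μ * ⟪x t, u⟫) • u) (hx0 : ⟪x 0, u⟫ ≠ 0) (T : ℕ) :
    1 - (‖x 0‖ ^ 2 - ⟪x 0, u⟫ ^ 2) / ⟪x 0, u⟫ ^ 2 * ((1 + μ) ^ (2 * T))⁻¹ ≤
      |⟪‖x T‖⁻¹ • x T, u⟫| := by
  have hxT : ⟪x T, u⟫ = (1 + μ) ^ T * ⟪x 0, u⟫ := inner_eq_pow_mul_of_rankOne_step hu hx T
  have hxT0 : ⟪x T, u⟫ ≠ 0 := by rw [hxT]; exact mul_ne_zero (by positivity) hx0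
  convert one_sub_div_le_abs_inner_inv_norm_smul hu hxT0 using 2
  rw [norm_sq_sub_inner_sq_of_rankOne_step hu hx T, hxT, pow_mul']
  field_simp

end RankOneDynamic

lemma Real.exp_neg_two_mul_log_mul_natCast {ρ : ℝ} (hρ : 0 < ρ) (T : ℕ) :
    Real.exp (-(2 * Real.log ρ * T)) = (ρ ^ (2 * T))⁻¹ := by
  rw [Real.exp_neg, show 2 * Real.log ρ * T = Real.log ρ * ((2 * T : ℕ) : ℝ) by push_cast; ring,
    ← Real.rpow_def_of_pos hρ, Real.rpow_natCast]

/-- Regression: exponential rate of directional convergence of the adversarial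
covariate-shift dynamic to the blessing direction. -/
theorem regression_directional_convergence_rate
    {H : Type*} [NormedAddCommGroup H] [InnerProductSpace ℝ H]
    (θs θ0 : H) (hne : θs ≠ θ0) (γ : ℝ) (hγ : 0 < γ)
    (x : ℕ → H)
    (hx : ∀ t : ℕ, x (t + 1) = x t + (2 * γ * ⟪x t, θs - θ0⟫) • (θs - θ0))
    (hx0 : ⟪x 0, θs - θ0⟫ ≠ 0) :
    ∀ T : ℕ,
      1 - (‖x 0‖ ^ 2 - ⟪x 0, ‖θs - θ0‖⁻¹ • (θs - θ0)⟫ ^ 2) /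
            ⟪x 0, ‖θs - θ0‖⁻¹ • (θs - θ0)⟫ ^ 2 *
          Real.exp (-(2 * Real.log (1 + 2 * γ * ‖θs - θ0‖ ^ 2) * T)) ≤
        |⟪‖x T‖⁻¹ • x T, ‖θs - θ0‖⁻¹ • (θs - θ0)⟫| ∧
      |⟪‖x T‖⁻¹ • x T, ‖θs - θ0‖⁻¹ • (θs - θ0)⟫| ≤ 1 := by
  set v := θs - θ0
  have hv : ‖v‖ ≠ 0 := norm_ne_zero_iff.mpr (sub_ne_zero.mpr hne)
  have hu : ‖‖v‖⁻¹ • v‖ = 1 := norm_smul_inv_norm (sub_ne_zero.mpr hne)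
  have hρ : 0 < 1 + 2 * γ * ‖v‖ ^ 2 := by positivity
  have hstep : ∀ t, x (t + 1) = x t + (2 * γ * ‖v‖ ^ 2 * ⟪x t, ‖v‖⁻¹ • v⟫) • (‖v‖⁻¹ • v) := by
    intro t
    rw [hx t, real_inner_smul_right, smul_smul]
    congr 2
    field_simp
  have hu0 : ⟪x 0, ‖v‖⁻¹ • v⟫ ≠ 0 := by
    rw [real_inner_smul_right]; exact mul_ne_zero (inv_ne_zero hv) hx0
  intro T
  rw [Real.exp_neg_two_mul_log_mul_natCast hρ]
  exact ⟨one_sub_div_mul_inv_pow_le_abs_inner_of_rankOne_step hu hρ hstep hu0 T,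
    hu ▸ abs_inner_inv_norm_smul_le_norm _ _⟩
end

section
/- Fix η, r > 0 and consider the recursion a_{t+1} = a_t − η·σ′(a_t+b_t)·a_t + η·(σ(a_t) − σ(a_t+b_t)), b_{t+1} = b_t − η·r·σ′(a_t+b_t)·a_t. Suppose that a_t + b_t is eventually negative and strictly decreasing with a_t + b_t → −∞, that a_t → +∞, and that liminf_{t→∞} σ′(a_t+b_t)·(r·a_t − b_t) > 0 while lim_{t→∞} (r·a_t − b_t)/t = η·r. Then limsup_{T→∞} |a_T + b_T| / log T ≤ 1. -/
/-- The sigmoid function `σ(z) = 1/(1+e^{-z})`. -/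
noncomputable def sigmoid (z : ℝ) : ℝ := 1 / (1 + Real.exp (-z))

/-- The derivative of the sigmoid, `σ'(z) = σ(z)(1-σ(z))`. -/
noncomputable def sigmoid' (z : ℝ) : ℝ := sigmoid z * (1 - sigmoid z)

lemma sigmoid'_pos (z : ℝ) : 0 < sigmoid' z := by
  have h := Real.exp_pos (-z)
  have h1 : (0:ℝ) < 1 + Real.exp (-z) := by linarith
  have hs : 0 < sigmoid z := by
    unfold sigmoid; positivity
  have hs1 : sigmoid z < 1 := by
    unfold sigmoid
    rw [div_lt_one h1]; linarith
  unfold sigmoid'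
  nlinarith

lemma sigmoid'_le_exp (z : ℝ) : sigmoid' z ≤ Real.exp z := by
  have h := Real.exp_pos (-z)
  have h1 : (0:ℝ) < 1 + Real.exp (-z) := by linarith
  have hmul : Real.exp z * Real.exp (-z) = 1 := by
    rw [← Real.exp_add]; simp
  have heq : sigmoid' z = Real.exp (-z) / (1 + Real.exp (-z))^2 := by
    unfold sigmoid' sigmoid
    field_simp
    ring
  rw [heq, div_le_iff₀ (by positivity)]
  nlinarith [h, Real.exp_pos z]

/-- Under the stated asymptotic hypotheses, `limsup_T |a_T + b_T| / log T ≤ 1`,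
expressed as: for every `ε > 0`, eventually `|a_T + b_T| / log T ≤ 1 + ε`. -/
theorem ab_sum_log_growth (η r : ℝ) (hη : 0 < η) (hr : 0 < r)
    (a b : ℕ → ℝ)
    (ha : ∀ t : ℕ, a (t + 1) =
      a t - η * sigmoid' (a t + b t) * a t +
        η * (sigmoid (a t) - sigmoid (a t + b t)))
    (hb : ∀ t : ℕ, b (t + 1) = b t - η * r * sigmoid' (a t + b t) * a t)
    (hmono : ∃ t₀ : ℕ, ∀ t ≥ t₀,
      a t + b t < 0 ∧ a (t + 1) + b (t + 1) < a t + b t)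
    (habot : Filter.Tendsto (fun t : ℕ => a t + b t) Filter.atTop Filter.atBot)
    (hatop : Filter.Tendsto a Filter.atTop Filter.atTop)
    (hliminf : ∃ m > (0 : ℝ), ∀ᶠ t : ℕ in Filter.atTop,
      m ≤ sigmoid' (a t + b t) * (r * a t - b t))
    (hlin : Filter.Tendsto (fun t : ℕ => (r * a t - b t) / t) Filter.atTop
      (nhds (η * r))) :
    ∀ ε > (0 : ℝ), ∀ᶠ T : ℕ in Filter.atTop,
      |a T + b T| / Real.log T ≤ 1 + ε := by
  intro ε hε
  obtain ⟨m, hm, hev⟩ := hliminf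
  obtain ⟨t₀, hneg⟩ := hmono
  set c : ℝ := m / (2 * (η * r)) with hc
  have hcpos : 0 < c := by positivity
  -- eventually (r a t - b t)/t < 2 η r
  have hE3 : ∀ᶠ t : ℕ in Filter.atTop, (r * a t - b t) / t < 2 * (η * r) :=
    hlin.eventually_lt_const (by nlinarith)
  have hE1 : ∀ᶠ t : ℕ in Filter.atTop, a t + b t < 0 :=
    Filter.eventually_atTop.2 ⟨t₀, fun t ht => (hneg t ht).1⟩
  have hlog : Filter.Tendsto (fun T : ℕ => Real.log T) Filter.atTop Filter.atTop :=
    Real.tendsto_log_atTop.comp tendsto_natCast_atTop_atTop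
  have hE5 : ∀ᶠ T : ℕ in Filter.atTop,
      max 1 ((-Real.log c) / ε) ≤ Real.log T :=
    hlog.eventually_ge_atTop _
  have hE4 : ∀ᶠ T : ℕ in Filter.atTop, 1 ≤ (T : ℝ) := by
    filter_upwards [Filter.eventually_ge_atTop 1] with T hT
    exact_mod_cast hT
  filter_upwards [hE1, hev, hE3, hE4, hE5] with T h1 h2 h3 h4 h5
  have hTpos : (0 : ℝ) < T := by linarith
  have hlogT : 1 ≤ Real.log T := le_trans (le_max_left _ _) h5
  have hlogT' : (-Real.log c) / ε ≤ Real.log T := le_trans (le_max_right _ _) h5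
  have hσ := sigmoid'_pos (a T + b T)
  -- X > 0
  have hX : 0 < r * a T - b T := by nlinarith
  have hXlt : r * a T - b T < 2 * (η * r) * T := by
    rw [div_lt_iff₀ hTpos] at h3; linarith
  -- σ' ≥ m / (2ηr T) = c / T
  have hσge : c / T ≤ sigmoid' (a T + b T) := by
    rw [div_le_iff₀ hTpos, hc, div_le_iff₀ (by positivity)]
    nlinarith [mul_le_mul_of_nonneg_left hXlt.le hσ.le]
  have hexp : c / T ≤ Real.exp (a T + b T) :=
    le_trans hσge (sigmoid'_le_exp _)
  have hs : Real.log c - Real.log T ≤ a T + b T := by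
    have := Real.log_le_log (by positivity) hexp
    rwa [Real.log_exp, Real.log_div (ne_of_gt hcpos) (ne_of_gt hTpos)] at this
  have habs : |a T + b T| ≤ Real.log T - Real.log c := by
    rw [abs_of_neg h1]; linarith
  have hεlog : -Real.log c ≤ ε * Real.log T := (div_le_iff₀' hε).mp hlogT'
  calc |a T + b T| / Real.log T ≤ (Real.log T - Real.log c) / Real.log T := by
        exact div_le_div_of_nonneg_right habs (by linarith)
      _ ≤ 1 + ε := by
        rw [div_le_iff₀ (by linarith)]; nlinarith
end

section
/- Fix η, r > 0 and consider the recursion a_{t+1} = a_t − η·σ′(a_t+b_t)·a_t + η·(σ(a_t) − σ(a_t+b_t)), b_{t+1} = b_t − η·r·σ′(a_t+b_t)·a_t. Suppose that a_t → +∞, a_t + b_t → −∞, and for all t beyond some t₀ the ratio L_t := σ′(a_t+b_t)·a_t / (σ(a_t) − σ(a_t+b_t)) satisfies L_t ≥ (1 + 1/a_t)/((1+r) + 1/a_t). Then liminf_{t→∞} σ′(a_t+b_t)·a_t ≥ 1/(1+r), and consequently liminf_{t→∞} σ′(a_t+b_t)·(r·a_t − b_t) ≥ r/(1+r). -/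
open Filter Topology

lemma sigmoid_eq_real_sigmoid : sigmoid = Real.sigmoid := by
  funext z
  rw [sigmoid, Real.sigmoid_def, one_div]

lemma Real.tendsto_sigmoid_mul_self_atBot :
    Tendsto (fun z => Real.sigmoid z * z) atBot (𝓝 0) := by
  have hexp : Tendsto (fun w => w * Real.exp (-w)) atTop (𝓝 0) := by
    simpa using Real.tendsto_pow_mul_exp_neg_atTop_nhds_zero 1
  have h : Tendsto (fun w => -(Real.sigmoid w * (w * Real.exp (-w)))) atTop (𝓝 0) := by
    simpa using (Real.tendsto_sigmoid_atTop.mul hexp).neg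
  refine (h.comp tendsto_neg_atBot_atTop).congr fun z => ?_
  have hσ : Real.sigmoid (-z) * Real.exp z = Real.sigmoid z := by
    simpa using Real.sigmoid_mul_rexp_neg (-z)
  simp only [Function.comp_apply, neg_neg]
  linear_combination z * hσ

lemma tendsto_sigmoid'_mul_self_atBot :
    Tendsto (fun z => sigmoid' z * z) atBot (𝓝 0) := by
  have h := (tendsto_const_nhds (x := (1 : ℝ)).sub Real.tendsto_sigmoid_atBot).mul
    Real.tendsto_sigmoid_mul_self_atBot
  simp only [sub_zero, mul_zero] at h
  refine h.congr fun z => ?_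
  rw [sigmoid', sigmoid_eq_real_sigmoid]
  ring

lemma tendsto_one_add_inv_div_add_inv_atTop {c : ℝ} (hc : c ≠ 0) :
    Tendsto (fun x : ℝ => (1 + 1 / x) / (c + 1 / x)) atTop (𝓝 (1 / c)) := by
  have hinv : Tendsto (fun x : ℝ => 1 / x) atTop (𝓝 0) := by
    simpa only [one_div] using tendsto_inv_atTop_zero
  simpa only [add_zero, Pi.div_def] using
    (hinv.const_add 1).div (hinv.const_add c) (by simpa using hc)

lemma eventually_ge_sub_of_tendsto_of_eventuallyLE {ι : Type*} {l : Filter ι} {f g : ι → ℝ}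
    {c c' : ℝ} (hg : Tendsto g l (𝓝 c)) (hgf : g ≤ᶠ[l] f) (hc : c' ≤ c) :
    ∀ ε > (0 : ℝ), ∀ᶠ t in l, f t ≥ c' - ε := by
  intro ε hε
  filter_upwards [hg.eventually (eventually_gt_nhds (by linarith : c' - ε < c)), hgf]
    with t hgt hft
  linarith

theorem liminf_sigma_deriv_bounds_general (r : ℝ) (hr : 0 < r)
    (a b : ℕ → ℝ)
    (hatop : Filter.Tendsto a Filter.atTop Filter.atTop)
    (habot : Filter.Tendsto (fun t : ℕ => a t + b t) Filter.atTop Filter.atBot)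
    (hL : ∃ t₀ : ℕ, ∀ t ≥ t₀,
      sigmoid' (a t + b t) * a t / (sigmoid (a t) - sigmoid (a t + b t)) ≥
        (1 + 1 / a t) / ((1 + r) + 1 / a t)) :
    (∀ ε > (0 : ℝ), ∀ᶠ t : ℕ in Filter.atTop,
      sigmoid' (a t + b t) * a t ≥ 1 / (1 + r) - ε) ∧
    (∀ ε > (0 : ℝ), ∀ᶠ t : ℕ in Filter.atTop,
      sigmoid' (a t + b t) * (r * a t - b t) ≥ r / (1 + r) - ε) := by
  obtain ⟨t₀, hLt⟩ := hL
  set D := fun t => sigmoid (a t) - sigmoid (a t + b t)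
  set R := fun t => (1 + 1 / a t) / ((1 + r) + 1 / a t)
  have hD : Tendsto D atTop (𝓝 1) := by
    simpa [D, sigmoid_eq_real_sigmoid] using
      (Real.tendsto_sigmoid_atTop.comp hatop).sub (Real.tendsto_sigmoid_atBot.comp habot)
  have hR : Tendsto R atTop (𝓝 (1 / (1 + r))) :=
    (tendsto_one_add_inv_div_add_inv_atTop (by positivity)).comp hatop
  have hDR : Tendsto (fun t => D t * R t) atTop (𝓝 (1 / (1 + r))) := by
    simpa only [one_mul] using hD.mul hR
  have hlower : ∀ᶠ t in atTop, D t * R t ≤ sigmoid' (a t + b t) * a t := by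
    filter_upwards [hD.eventually (eventually_gt_nhds one_pos), eventually_ge_atTop t₀]
      with t hDpos ht
    exact (le_div_iff₀' hDpos).mp (hLt t ht)
  refine ⟨eventually_ge_sub_of_tendsto_of_eventuallyLE hDR hlower le_rfl, ?_⟩
  refine eventually_ge_sub_of_tendsto_of_eventuallyLE
    ((hDR.const_mul (1 + r)).sub (tendsto_sigmoid'_mul_self_atBot.comp habot)) ?_ ?_
  · filter_upwards [hlower] with t ht
    simp only [Function.comp_apply]
    linear_combination (1 + r) * ht
  · field_simp
    linarith

/-- If `a_t → +∞`, `a_t + b_t → -∞` and eventually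
`L_t ≥ (1 + 1/a_t)/((1+r) + 1/a_t)`, then `liminf σ'(a_t+b_t)·a_t ≥ 1/(1+r)` and
`liminf σ'(a_t+b_t)·(r·a_t - b_t) ≥ r/(1+r)` (liminf bounds expressed in
`ε`-eventual form). -/
theorem liminf_sigma_deriv_bounds (η r : ℝ) (hη : 0 < η) (hr : 0 < r)
    (a b : ℕ → ℝ)
    (ha : ∀ t : ℕ, a (t + 1) =
      a t - η * sigmoid' (a t + b t) * a t +
        η * (sigmoid (a t) - sigmoid (a t + b t)))
    (hb : ∀ t : ℕ, b (t + 1) = b t - η * r * sigmoid' (a t + b t) * a t)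
    (hatop : Filter.Tendsto a Filter.atTop Filter.atTop)
    (habot : Filter.Tendsto (fun t : ℕ => a t + b t) Filter.atTop Filter.atBot)
    (hL : ∃ t₀ : ℕ, ∀ t ≥ t₀,
      sigmoid' (a t + b t) * a t / (sigmoid (a t) - sigmoid (a t + b t)) ≥
        (1 + 1 / a t) / ((1 + r) + 1 / a t)) :
    (∀ ε > (0 : ℝ), ∀ᶠ t : ℕ in Filter.atTop,
      sigmoid' (a t + b t) * a t ≥ 1 / (1 + r) - ε) ∧
    (∀ ε > (0 : ℝ), ∀ᶠ t : ℕ in Filter.atTop,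
      sigmoid' (a t + b t) * (r * a t - b t) ≥ r / (1 + r) - ε) :=
  liminf_sigma_deriv_bounds_general r hr a b hatop habot hL
end
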